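/- arXiv:2204.11288 — 8 statements merged into one kernel-verified Lean document; each statement's English description precedes it below -/
import Mathlib

section
/- Let $X$ be a finite quandle containing a subquandle $Y$ with more than one element such that $|Y|$ is invertible in the coefficient ring $\mathbf{k}$. Then the quandle ring $\mathbf{k}[X]$ has a non-trivial idempotent; specifically, $u = \frac{1}{|Y|} \sum_{y \in Y} e_y$ satisfies $u^2 = u$ and $u \neq e_x$ for all $x \in X$. -/
/-- A quandle with the paper's (right-multiplication) convention:
`x * y = S_y(x)`, each `S_y` is an automorphism of the quandle fixing `y`. -/
class Quandle' (Q : Type*) extends Mul Q where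
  invMul : Q → Q → Q
  rightDist : ∀ x y z : Q, (x * y) * z = (x * z) * (y * z)
  invMul_mul : ∀ x y : Q, invMul (x * y) y = x
  mul_invMul : ∀ x y : Q, (invMul x y) * y = x
  mul_self : ∀ x : Q, x * x = x

/-!
Right multiplication by `z ∈ Y` is injective (quandle axiom), so it permutes the finite set `Y`.
Hence `(∑_{y ∈ Y} e_y)² = |Y| • ∑_{y ∈ Y} e_y`, and scaling by `c = 1/|Y|` gives an idempotent.
It has the non-zero coefficient `c` at the (at least two) points of `Y`, so it is no basis element.
-/

open MonoidAlgebra Finset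

namespace Quandle'

variable {Q : Type*} [Quandle' Q]

theorem mul_left_injective (z : Q) : Function.Injective (· * z) := fun a b h => by
  simpa only [invMul_mul] using congrArg (invMul · z) h

theorem sum_comp_mul_right {M : Type*} [AddCommMonoid M] {Y : Finset Q}
    (hY : ∀ a ∈ Y, ∀ b ∈ Y, a * b ∈ Y) {z : Q} (hz : z ∈ Y) (f : Q → M) :
    ∑ y ∈ Y, f (y * z) = ∑ y ∈ Y, f y := by
  let e : Q ↪ Q := ⟨(· * z), mul_left_injective z⟩
  have hYe : Y.map e = Y := map_eq_of_subset fun _ h => by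
    obtain ⟨y, hy, rfl⟩ := mem_map.1 h
    exact hY y hy z hz
  conv_rhs => rw [← hYe, sum_map]
  rfl

theorem sum_single_mul_self (k : Type*) [Semiring k] {Y : Finset Q}
    (hY : ∀ a ∈ Y, ∀ b ∈ Y, a * b ∈ Y) :
    (∑ y ∈ Y, single y (1 : k)) * ∑ y ∈ Y, single y (1 : k) =
      (#Y : k) • ∑ y ∈ Y, single y (1 : k) := by
  rw [sum_mul_sum, sum_comm]
  simp_rw [single_mul_single, one_mul]
  rw [sum_congr rfl fun z hz => sum_comp_mul_right hY hz fun y => single y (1 : k), sum_const,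
    Nat.cast_smul_eq_nsmul]

end Quandle'

theorem isIdempotentElem_smul_of_mul_self_eq_smul {k A : Type*} [CommMonoid k] [Mul A]
    [MulAction k A] [IsScalarTower k A A] [SMulCommClass k A A] {s : A} {n c : k}
    (hs : s * s = n • s) (hc : n * c = 1) : IsIdempotentElem (c • s) := by
  rw [IsIdempotentElem, smul_mul_smul_comm, hs, smul_smul, mul_assoc, mul_comm c n, hc, mul_one]

theorem MonoidAlgebra.coeff_sum_smul_single_of_mem {k M : Type*} [Semiring k] {Y : Finset M}
    (c : k) {m : M} (hm : m ∈ Y) : (∑ y ∈ Y, c • single y (1 : k)).coeff m = c := by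
  classical
  simp [coeff_sum, Finsupp.single_apply, hm]

theorem MonoidAlgebra.sum_smul_single_ne_single {k M : Type*} [Semiring k] {Y : Finset M} {c : k}
    (hc : c ≠ 0) (hY : 1 < #Y) (x : M) : ∑ y ∈ Y, c • single y (1 : k) ≠ single x 1 := by
  obtain ⟨m, hm, hmx⟩ := exists_mem_ne hY x
  intro h
  have := congrArg (coeff · m) h
  simp only [coeff_sum_smul_single_of_mem c hm, coeff_single, Finsupp.single_eq_of_ne hmx] at this
  exact hc this

theorem stmt3_general {Q : Type*} [Quandle' Q] (k : Type*) [CommRing k] [IsDomain k]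
    (Y : Finset Q) (hsub : ∀ a ∈ Y, ∀ b ∈ Y, a * b ∈ Y) (hcard : 2 ≤ Y.card)
    (c : k) (hc : (Y.card : k) * c = 1) :
    (∑ y ∈ Y, c • (MonoidAlgebra.single y (1 : k) : MonoidAlgebra k Q)) *
        (∑ y ∈ Y, c • (MonoidAlgebra.single y (1 : k) : MonoidAlgebra k Q)) =
      ∑ y ∈ Y, c • (MonoidAlgebra.single y (1 : k) : MonoidAlgebra k Q) ∧
    ∀ x : Q, (∑ y ∈ Y, c • (MonoidAlgebra.single y (1 : k) : MonoidAlgebra k Q)) ≠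
      MonoidAlgebra.single x (1 : k) := by
  have hc0 : c ≠ 0 := right_ne_zero_of_mul_eq_one hc
  refine ⟨?_, sum_smul_single_ne_single hc0 hcard⟩
  rw [← smul_sum]
  exact isIdempotentElem_smul_of_mul_self_eq_smul (Quandle'.sum_single_mul_self k hsub) hc

/-- A finite quandle with a subquandle `Y` of size ≥ 2 whose cardinality is invertible in `k`
has the non-trivial idempotent `(1/|Y|) ∑_{y ∈ Y} e_y`. -/
theorem stmt3 {Q : Type*} [Quandle' Q] [Fintype Q] (k : Type*) [CommRing k] [IsDomain k]
    (Y : Finset Q) (hsub : ∀ a ∈ Y, ∀ b ∈ Y, a * b ∈ Y) (hcard : 2 ≤ Y.card)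
    (c : k) (hc : (Y.card : k) * c = 1) :
    (∑ y ∈ Y, c • (MonoidAlgebra.single y (1 : k) : MonoidAlgebra k Q)) *
        (∑ y ∈ Y, c • (MonoidAlgebra.single y (1 : k) : MonoidAlgebra k Q)) =
      ∑ y ∈ Y, c • (MonoidAlgebra.single y (1 : k) : MonoidAlgebra k Q) ∧
    ∀ x : Q, (∑ y ∈ Y, c • (MonoidAlgebra.single y (1 : k) : MonoidAlgebra k Q)) ≠
      MonoidAlgebra.single x (1 : k) :=
  stmt3_general k Y hsub hcard c hc
end

section
/- Let $X$ be a quandle containing a trivial subquandle $Y$ of order at least two. Then for any $n \geq 2$, any distinct elements $y_1, \ldots, y_n \in Y$, and any coefficients $\alpha_1, \ldots, \alpha_n \in \mathbf{k}$ with $\sum_{i=1}^n \alpha_i = 1$, the element $u = \sum_{i=1}^n \alpha_i e_{y_i}$ is an idempotent of the quandle ring $\mathbf{k}[X]$. In particular, $\mathbf{k}[X]$ has non-trivial idempotents. -/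
namespace MonoidAlgebra

variable {k G ι : Type*} [Fintype ι]

theorem sum_smul_single_mul_self_of_mul_eq_left [CommSemiring k] [Mul G] (y : ι → G)
    (hy : ∀ i j, y i * y j = y i) (α : ι → k) (hα : ∑ i, α i = 1) :
    (∑ i, α i • single (y i) (1 : k)) * (∑ i, α i • single (y i) (1 : k)) =
      ∑ i, α i • single (y i) (1 : k) := by
  have hterm : ∀ i j, (α i • single (y i) (1 : k)) * (α j • single (y j) 1) =
      (α i * α j) • single (y i) 1 := fun i j => by
    rw [smul_mul_smul_comm, single_mul_single, hy, one_mul]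
  simp_rw [Finset.sum_mul_sum, hterm, ← Finset.sum_smul, ← Finset.mul_sum, hα, mul_one]

theorem coeff_sum_smul_single_of_injective [Semiring k] {y : ι → G} (hy : Function.Injective y)
    (α : ι → k) (j : ι) : (∑ i, α i • single (y i) (1 : k)).coeff (y j) = α j := by
  classical
  simp [coeff_sum, coeff_single, Finsupp.single_apply, hy.eq_iff]

theorem ne_single_one_of_coeff_ne [Semiring k] {u : MonoidAlgebra k G} {x₀ : G}
    (h0 : u.coeff x₀ ≠ 0) (h1 : u.coeff x₀ ≠ 1) (x : G) : u ≠ single x 1 := by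
  classical
  rintro rfl
  rw [coeff_single, Finsupp.single_apply] at h0 h1
  split_ifs at h0 h1 <;> contradiction

end MonoidAlgebra

open MonoidAlgebra in
theorem stmt4_general {Q : Type*} [Quandle' Q] (k : Type*) [CommRing k]
    (hk : ∃ a : k, a ≠ 0 ∧ a ≠ 1)
    (n : ℕ) (hn : 2 ≤ n) (y : Fin n → Q) (hy : Function.Injective y)
    (htriv : ∀ i j : Fin n, y i * y j = y i)
    (α : Fin n → k) (hα : ∑ i, α i = 1) :
    (∑ i, α i • (MonoidAlgebra.single (y i) (1 : k) : MonoidAlgebra k Q)) *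
        (∑ i, α i • (MonoidAlgebra.single (y i) (1 : k) : MonoidAlgebra k Q)) =
      ∑ i, α i • (MonoidAlgebra.single (y i) (1 : k) : MonoidAlgebra k Q) ∧
    ∃ u : MonoidAlgebra k Q, u * u = u ∧ u ≠ 0 ∧ ∀ x : Q, u ≠ MonoidAlgebra.single x (1 : k) := by
  refine ⟨sum_smul_single_mul_self_of_mul_eq_left y htriv α hα, ?_⟩
  obtain ⟨a, ha0, ha1⟩ := hk
  let y₂ : Fin 2 → Q := y ∘ Fin.castLE hn
  let β : Fin 2 → k := ![a, 1 - a]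
  have hcoeff : (∑ i, β i • single (y₂ i) (1 : k)).coeff (y₂ 0) = a :=
    coeff_sum_smul_single_of_injective (hy.comp (Fin.castLE_injective hn)) β 0
  refine ⟨_, sum_smul_single_mul_self_of_mul_eq_left y₂ (fun i j => htriv _ _) β
    (by simp [β]), ?_, ne_single_one_of_coeff_ne (hcoeff ▸ ha0) (hcoeff ▸ ha1)⟩
  exact fun h => ha0 (by rw [← hcoeff, h, coeff_zero, Finsupp.zero_apply])

/-- If a quandle has a trivial subquandle with at least two elements, then any combination
`∑ αᵢ e_{yᵢ}` with `∑ αᵢ = 1` of distinct elements of it is an idempotent of `k[X]`;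
in particular `k[X]` has non-trivial idempotents. -/
theorem stmt4 {Q : Type*} [Quandle' Q] (k : Type*) [CommRing k] [IsDomain k]
    (hk : ∃ a : k, a ≠ 0 ∧ a ≠ 1)
    (n : ℕ) (hn : 2 ≤ n) (y : Fin n → Q) (hy : Function.Injective y)
    (htriv : ∀ i j : Fin n, y i * y j = y i)
    (α : Fin n → k) (hα : ∑ i, α i = 1) :
    (∑ i, α i • (MonoidAlgebra.single (y i) (1 : k) : MonoidAlgebra k Q)) *
        (∑ i, α i • (MonoidAlgebra.single (y i) (1 : k) : MonoidAlgebra k Q)) =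
      ∑ i, α i • (MonoidAlgebra.single (y i) (1 : k) : MonoidAlgebra k Q) ∧
    ∃ u : MonoidAlgebra k Q, u * u = u ∧ u ≠ 0 ∧ ∀ x : Q, u ≠ MonoidAlgebra.single x (1 : k) :=
  stmt4_general k hk n hn y hy htriv α hα
end

section
/- Let $G$ be an abelian group with no element of order 2 and no element of order 3. Then the quandle ring $\mathbb{Z}[\operatorname{Core}(G)]$ has no non-trivial idempotent whose support has at most three elements; i.e., if $u = \alpha e_x + \beta e_y + \gamma e_z$ with $x, y, z \in G$ distinct and $\alpha, \beta, \gamma \in \mathbb{Z}$ satisfies $u^2 = u$ and $u \neq 0$, then $u$ equals $e_x$, $e_y$, or $e_z$. -/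
/-- The core quandle of an abelian group: same carrier, operation `x * y = 2y - x`. -/
def CoreQ (G : Type*) := G

instance {G : Type*} [AddCommGroup G] : Mul (CoreQ G) :=
  ⟨fun x y => show G from (2 : ℤ) • (show G from y) - (show G from x)⟩

/-!
Write `u = α e_x + β e_y + γ e_z`. Without 2- and 3-torsion, `a * b ∉ {a, b}` and
`a * b ≠ b * a` for `a ≠ b`, so at most one of the relations `x * y = z`, `y * x = z`,
`x * z = y` (i.e. `x + z = 2y`, `y + z = 2x`, `x + y = 2z`) holds, and one of the three points,
say `z`, is not a product of the other two. Comparing the coefficients of `u² = u` at `x, y, z`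
then gives `γ² = γ`, `α² + tβγ = α`, `β² + tαγ = β`, where `t = 1` if `z` is the midpoint
of `x` and `y` (`y * z = x`) and `t = 0` otherwise. The augmentation `e_a ↦ 1` is
multiplicative, so also `s² = s` for `s = α + β + γ`, and these integer equations leave only
`(α, β, γ) = 0` or a unit vector.
-/

namespace CoreQ

variable {G : Type*} [AddCommGroup G]

lemma mul_eq_iff {a b c : CoreQ G} :
    a * b = c ↔ (2 : ℤ) • (show G from b) - (show G from a) = (show G from c) := Iff.rfl

@[simp] lemma mul_self (a : CoreQ G) : a * a = a := by
  rw [mul_eq_iff, two_smul, add_sub_cancel_right]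

lemma mul_mul_cancel_right (a b : CoreQ G) : a * b * b = a := by
  rw [mul_eq_iff]; exact sub_sub_cancel _ _

lemma mul_eq_iff_mul_eq {a b c : CoreQ G} : a * b = c ↔ c * b = a := by
  constructor <;> rintro rfl <;> exact mul_mul_cancel_right _ _

@[simp] lemma mul_eq_right_iff {a b : CoreQ G} : a * b = b ↔ a = b := by
  rw [mul_eq_iff, two_smul, add_sub_assoc, add_eq_left, sub_eq_zero, eq_comm]; rfl

lemma mul_eq_left_iff (h2 : ∀ g : G, (2 : ℤ) • g = 0 → g = 0) {a b : CoreQ G} :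
    a * b = a ↔ a = b := by
  refine ⟨fun h => ?_, fun h => h ▸ mul_self a⟩
  have := h2 _ (show (2 : ℤ) • ((show G from b) - (show G from a)) = 0 by
    rw [mul_eq_iff] at h; linear_combination (norm := module) h)
  exact (sub_eq_zero.mp this).symm

lemma mul_comm_iff (h3 : ∀ g : G, (3 : ℤ) • g = 0 → g = 0) {a b : CoreQ G} :
    a * b = b * a ↔ a = b := by
  refine ⟨fun h => ?_, fun h => h ▸ rfl⟩
  have := h3 _ (show (3 : ℤ) • ((show G from b) - (show G from a)) = 0 by
    change (2 : ℤ) • (show G from b) - (show G from a)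
      = (2 : ℤ) • (show G from a) - (show G from b) at h
    linear_combination (norm := module) h)
  exact (sub_eq_zero.mp this).symm

lemma mul_ne_of_ne_of_ne (h3 : ∀ g : G, (3 : ℤ) • g = 0 → g = 0) {x y z : CoreQ G}
    (hxy : x ≠ y) (hyz : y ≠ z) (hxz : x ≠ z) :
    (x * y ≠ z ∧ y * x ≠ z) ∨ (x * z ≠ y ∧ z * x ≠ y) ∨ (y * z ≠ x ∧ z * y ≠ x) := by
  by_cases hQ : x * y = z
  · refine Or.inr (Or.inl ⟨fun hP => ?_, fun hR => ?_⟩)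
    · exact hyz ((mul_comm_iff h3).mp
        ((mul_eq_iff_mul_eq.mp hP).trans (mul_eq_iff_mul_eq.mp hQ).symm))
    · exact hxy ((mul_comm_iff h3).mp (hQ.trans (mul_eq_iff_mul_eq.mp hR).symm))
  by_cases hR : y * x = z
  · refine Or.inr (Or.inr ⟨fun hP => ?_, fun hQ' => hQ (mul_eq_iff_mul_eq.mp hQ')⟩)
    exact hxz ((mul_comm_iff h3).mp
      ((mul_eq_iff_mul_eq.mp hP).trans (mul_eq_iff_mul_eq.mp hR).symm))
  · exact Or.inl ⟨hQ, hR⟩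

end CoreQ

namespace MonoidAlgebra

variable {R M : Type*} [CommSemiring R] [Mul M]

noncomputable def augmentation : MonoidAlgebra R M →ₙₐ[R] R := liftMagma R 1

@[simp] lemma augmentation_single (m : M) (r : R) : augmentation (single m r) = r := by
  simp [augmentation]
  exact mul_one r

end MonoidAlgebra

namespace Int

lemma zero_or_unit_vector_of_isIdempotentElem {α β γ : ℤ} (hα : IsIdempotentElem α)
    (hβ : IsIdempotentElem β) (hγ : IsIdempotentElem γ) (hs : IsIdempotentElem (α + β + γ)) :
    α = 0 ∧ β = 0 ∧ γ = 0 ∨ α = 1 ∧ β = 0 ∧ γ = 0 ∨ α = 0 ∧ β = 1 ∧ γ = 0 ∨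
      α = 0 ∧ β = 0 ∧ γ = 1 := by
  rw [IsIdempotentElem.iff_eq_zero_or_one] at hα hβ hγ
  rcases hα with rfl | rfl <;> rcases hβ with rfl | rfl <;> rcases hγ with rfl | rfl <;>
    simp_all [IsIdempotentElem]

lemma zero_or_unit_vector_of_coeff_eqs {t α β γ : ℤ} (ht : t = 0 ∨ t = 1)
    (hα : α * α + t * (β * γ) = α) (hβ : β * β + t * (α * γ) = β) (hγ : γ * γ = γ)
    (hs : (α + β + γ) * (α + β + γ) = α + β + γ) :
    α = 0 ∧ β = 0 ∧ γ = 0 ∨ α = 1 ∧ β = 0 ∧ γ = 0 ∨ α = 0 ∧ β = 1 ∧ γ = 0 ∨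
      α = 0 ∧ β = 0 ∧ γ = 1 := by
  rcases ht with rfl | rfl
  · simp only [zero_mul, add_zero] at hα hβ
    exact zero_or_unit_vector_of_isIdempotentElem hα hβ hγ hs
  rcases IsIdempotentElem.iff_eq_zero_or_one.mp hγ with rfl | rfl
  · simp only [mul_zero, add_zero] at hα hβ
    exact zero_or_unit_vector_of_isIdempotentElem hα hβ hγ hs
  · obtain ⟨rfl, rfl⟩ := mul_self_add_mul_self_eq_zero.mp
      (by linear_combination hα + hβ : α * α + β * β = 0)
    simp

end Int

namespace CoreQ

open MonoidAlgebra

variable {G : Type*} [AddCommGroup G]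

theorem eq_zero_or_single_of_idempotent (h2 : ∀ g : G, (2 : ℤ) • g = 0 → g = 0)
    {x y z : CoreQ G} (hxy : x ≠ y) (hyz : y ≠ z) (hxz : x ≠ z)
    (hxyz : x * y ≠ z) (hyxz : y * x ≠ z) {α β γ : ℤ} {u : MonoidAlgebra ℤ (CoreQ G)}
    (hu : u = single x α + single y β + single z γ) (hid : u * u = u) :
    u = 0 ∨ u = single x 1 ∨ u = single y 1 ∨ u = single z 1 := by
  classical
  have hcoeff (w : CoreQ G) : (u * u).coeff w = u.coeff w := by rw [hid]
  have ez : γ * γ = γ := by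
    simpa [hu, add_mul, mul_add, mul_eq_left_iff h2, hyz, hxz, hxyz, hyxz, hyz.symm, hxz.symm]
      using hcoeff z
  have ex : α * α + (if y * z = x then 1 else 0) * (β * γ) = α := by
    split_ifs with h <;>
    simpa [hu, add_mul, mul_add, mul_eq_left_iff h2, hxy, hxz, hxyz, hxy.symm, hxz.symm, h,
      Finsupp.single_apply, mul_eq_iff_mul_eq (c := x)] using hcoeff x
  have ey : β * β + (if y * z = x then 1 else 0) * (α * γ) = β := by
    split_ifs with h <;>
    simpa [hu, add_mul, mul_add, mul_eq_left_iff h2, hyz, hxy, hyxz, hxy.symm, hyz.symm, h,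
      Finsupp.single_apply, mul_eq_iff_mul_eq (c := y)] using hcoeff y
  have es : (α + β + γ) * (α + β + γ) = α + β + γ := by
    simpa [hu] using congrArg augmentation hid
  rcases Int.zero_or_unit_vector_of_coeff_eqs (by split_ifs <;> simp) ex ey ez es with
    ⟨rfl, rfl, rfl⟩ | ⟨rfl, rfl, rfl⟩ | ⟨rfl, rfl, rfl⟩ | ⟨rfl, rfl, rfl⟩ <;> simp [hu]

end CoreQ

/-- If `G` is abelian with no 2-torsion and no 3-torsion, then `ℤ[Core(G)]` has no non-trivial
idempotent supported on at most three basis elements. -/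
theorem stmt8 {G : Type*} [AddCommGroup G]
    (h2 : ∀ g : G, (2 : ℤ) • g = 0 → g = 0) (h3 : ∀ g : G, (3 : ℤ) • g = 0 → g = 0)
    (x y z : CoreQ G) (hxy : x ≠ y) (hyz : y ≠ z) (hxz : x ≠ z)
    (α β γ : ℤ) (u : MonoidAlgebra ℤ (CoreQ G))
    (hu : u = α • MonoidAlgebra.single x (1 : ℤ) + β • MonoidAlgebra.single y (1 : ℤ)
        + γ • MonoidAlgebra.single z (1 : ℤ))
    (hid : u * u = u) (hne : u ≠ 0) :
    u = MonoidAlgebra.single x (1 : ℤ) ∨ u = MonoidAlgebra.single y (1 : ℤ) ∨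
      u = MonoidAlgebra.single z (1 : ℤ) := by
  have hu' : u = .single x α + .single y β + .single z γ := by simp [hu]
  rcases CoreQ.mul_ne_of_ne_of_ne h3 hxy hyz hxz with ⟨hz, hz'⟩ | ⟨hy, hy'⟩ | ⟨hx, hx'⟩
  · exact (CoreQ.eq_zero_or_single_of_idempotent h2 hxy hyz hxz hz hz' hu' hid).resolve_left hne
  · have := CoreQ.eq_zero_or_single_of_idempotent h2 hxz hyz.symm hxy hy hy'
      (by rw [hu', add_right_comm]) hid
    tauto
  · have := CoreQ.eq_zero_or_single_of_idempotent h2 hyz hxz.symm hxy.symm hx hx'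
      (by rw [hu', add_assoc, add_comm]) hid
    tauto
end

section
/- Let $X$ be a medial quandle and $u$ an idempotent of the quandle ring $\mathbf{k}[X]$. Then the right multiplication map $\hat{S}_u : \mathbf{k}[X] \to \mathbf{k}[X]$, $\hat{S}_u(w) = wu$, is a ring endomorphism of $\mathbf{k}[X]$. -/
/-!
Mediality is a multilinear identity, so it passes from `X` to `k[X]`; in any medial magma an
idempotent `u` gives `(v * w) * u = (v * w) * (u * u) = (v * u) * (w * u)`.
-/

theorem mul_right_self_distrib_of_medial {M : Type*} [Mul M]
    (medial : ∀ a b c d : M, a * b * (c * d) = a * c * (b * d)) {u : M} (hu : u * u = u)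
    (v w : M) : v * w * u = v * u * (w * u) := by
  rw [medial, hu]

theorem MonoidAlgebra.mul_mul_mul_comm_of_medial {k M : Type*} [CommSemiring k] [Mul M]
    (medial : ∀ a b c d : M, a * b * (c * d) = a * c * (b * d))
    (a b c d : MonoidAlgebra k M) : a * b * (c * d) = a * c * (b * d) := by
  induction a using MonoidAlgebra.induction_linear with
  | zero => simp only [zero_mul]
  | add a a' ha ha' => simp only [add_mul, ha, ha']
  | single x r =>
  induction b using MonoidAlgebra.induction_linear with
  | zero => simp only [zero_mul, mul_zero]
  | add b b' hb hb' => simp only [add_mul, mul_add, hb, hb']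
  | single y s =>
  induction c using MonoidAlgebra.induction_linear with
  | zero => simp only [zero_mul, mul_zero]
  | add c c' hc hc' => simp only [add_mul, mul_add, hc, hc']
  | single z t =>
  induction d using MonoidAlgebra.induction_linear with
  | zero => simp only [mul_zero]
  | add d d' hd hd' => simp only [mul_add, hd, hd']
  | single w e =>
    simp only [single_mul_single]
    rw [medial, mul_mul_mul_comm r]

theorem stmt9_general {Q : Type*} [Quandle' Q]
    (medial : ∀ a b c d : Q, (a * b) * (c * d) = (a * c) * (b * d))
    (k : Type*) [CommRing k]
    (u : MonoidAlgebra k Q) (hu : u * u = u) :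
    ∀ v w : MonoidAlgebra k Q, (v * w) * u = (v * u) * (w * u) :=
  mul_right_self_distrib_of_medial (MonoidAlgebra.mul_mul_mul_comm_of_medial medial) hu

/-- For a medial quandle, right multiplication by an idempotent of the quandle ring is
multiplicative (hence a ring endomorphism of `k[X]`). -/
theorem stmt9 {Q : Type*} [Quandle' Q]
    (medial : ∀ a b c d : Q, (a * b) * (c * d) = (a * c) * (b * d))
    (k : Type*) [CommRing k] [IsDomain k]
    (u : MonoidAlgebra k Q) (hu : u * u = u) (hu0 : u ≠ 0) :
    ∀ v w : MonoidAlgebra k Q, (v * w) * u = (v * u) * (w * u) :=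
  stmt9_general medial k u hu
end

section
/- Let $p : X \to Y$ be a quandle covering and $y, y' \in Y$ elements in the same connected component of $Y$ (i.e., $y' = \phi(y)$ for some $\phi$ in the inner automorphism group of $Y$). Then there is a bijection between the fibres $p^{-1}(y)$ and $p^{-1}(y')$, given by an inner automorphism of $X$. -/
/-- Right multiplication by `a` as a permutation of the quandle. -/
def rightMulPerm {Q : Type*} [Quandle' Q] (a : Q) : Equiv.Perm Q where
  toFun z := z * a
  invFun z := Quandle'.invMul z a
  left_inv z := Quandle'.invMul_mul z a
  right_inv z := Quandle'.mul_invMul z a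

/-! Since `p` is a surjective homomorphism, every generator `S_{p a}` of `Inn(Y)` is covered by
`S_a`, i.e. `p ∘ S_a = S_{p a} ∘ p`; semiconjugacy by `p` is stable under products and inverses,
so every `φ ∈ Inn(Y)` is covered by some `ψ ∈ Inn(X)`. Such a `ψ` carries the fibre over `y`
bijectively onto the fibre over `φ y`. -/

open Function

theorem Function.Semiconj.bijOn_preimage_singleton {α β : Type*} {p : α → β} {ψ : Equiv.Perm α}
    {φ : Equiv.Perm β} (h : Semiconj p ψ φ) (y : β) :
    Set.BijOn ψ (p ⁻¹' {y}) (p ⁻¹' {φ y}) := by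
  refine ⟨fun z (hz : p z = y) => show p (ψ z) = φ y by rw [h z, hz],
    ψ.injective.injOn, fun w (hw : p w = φ y) => ⟨ψ.symm w, ?_, ψ.apply_symm_apply w⟩⟩
  have hsymm : p (ψ.symm w) = φ.symm (p w) := h.inverses_right ψ.right_inv φ.left_inv w
  show p (ψ.symm w) = y
  rw [hsymm, hw, φ.symm_apply_apply]

section Quandle

variable {Q R : Type*} [Quandle' Q] [Quandle' R]

theorem semiconj_rightMulPerm {p : Q → R} (hom : ∀ a b : Q, p (a * b) = p a * p b) (a : Q) :
    Semiconj p (rightMulPerm a) (rightMulPerm (p a)) :=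
  fun z => hom z a

theorem exists_semiconj_of_mem_closure_rightMulPerm {p : Q → R}
    (hom : ∀ a b : Q, p (a * b) = p a * p b) (surj : Surjective p) {φ : Equiv.Perm R}
    (hφ : φ ∈ Subgroup.closure (Set.range (rightMulPerm (Q := R)))) :
    ∃ ψ ∈ Subgroup.closure (Set.range (rightMulPerm (Q := Q))), Semiconj p ψ φ := by
  induction hφ using Subgroup.closure_induction with
  | mem g hg =>
    obtain ⟨b, rfl⟩ := hg
    obtain ⟨a, rfl⟩ := surj b
    exact ⟨rightMulPerm a, Subgroup.subset_closure ⟨a, rfl⟩, semiconj_rightMulPerm hom a⟩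
  | one => exact ⟨1, one_mem _, Semiconj.id_right⟩
  | mul g h _ _ ihg ihh =>
    obtain ⟨ψg, hψg, hg⟩ := ihg
    obtain ⟨ψh, hψh, hh⟩ := ihh
    exact ⟨ψg * ψh, mul_mem hψg hψh, hg.comp_right hh⟩
  | inv g _ ihg =>
    obtain ⟨ψg, hψg, hg⟩ := ihg
    exact ⟨ψg⁻¹, inv_mem hψg, hg.inverses_right ψg.right_inv g.left_inv⟩

end Quandle

theorem stmt13_general {Q R : Type*} [Quandle' Q] [Quandle' R] (p : Q → R)
    (hom : ∀ a b : Q, p (a * b) = p a * p b) (surj : Function.Surjective p)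
    (y y' : R)
    (hcomp : ∃ φ ∈ Subgroup.closure (Set.range (rightMulPerm (Q := R))), φ y = y') :
    ∃ ψ ∈ Subgroup.closure (Set.range (rightMulPerm (Q := Q))),
      Set.BijOn ψ (p ⁻¹' {y}) (p ⁻¹' {y'}) := by
  obtain ⟨φ, hφ, rfl⟩ := hcomp
  obtain ⟨ψ, hψ, hsemi⟩ := exists_semiconj_of_mem_closure_rightMulPerm hom surj hφ
  exact ⟨ψ, hψ, hsemi.bijOn_preimage_singleton y⟩

/-- If `y` and `y'` lie in the same connected component of the base of a quandle covering,
then some inner automorphism of the total quandle maps the fibre over `y` bijectively onto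
the fibre over `y'`. -/
theorem stmt13 {Q R : Type*} [Quandle' Q] [Quandle' R] (p : Q → R)
    (hom : ∀ a b : Q, p (a * b) = p a * p b) (surj : Function.Surjective p)
    (cov : ∀ x x' : Q, p x = p x' → ∀ z : Q, z * x = z * x')
    (y y' : R)
    (hcomp : ∃ φ ∈ Subgroup.closure (Set.range (rightMulPerm (Q := R))), φ y = y') :
    ∃ ψ ∈ Subgroup.closure (Set.range (rightMulPerm (Q := Q))),
      Set.BijOn ψ (p ⁻¹' {y}) (p ⁻¹' {y'}) :=
  stmt13_general p hom surj y y' hcomp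
end

section
/- Let $p : X \to Y$ be a quandle covering, $\mathbf{k}$ an integral domain, $y \in Y$, and suppose $|p^{-1}(y)| \geq 2$. Let $I_y$ be a finite subset of $p^{-1}(y)$ and $\alpha_x \in \mathbf{k}$ for $x \in I_y$ with $\sum_{x \in I_y} \alpha_x = 0$ and not all $\alpha_x$ zero. Then $u = \sum_{x \in I_y} \alpha_x e_x$ is a non-zero right zero-divisor in $\mathbf{k}[X]$: for every $w \in \mathbf{k}[X]$, $w u = 0$. -/
namespace MonoidAlgebra

variable {k G : Type*} [Semiring k]

theorem mul_single_congr [Mul G] {x x' : G} (h : ∀ z : G, z * x = z * x')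
    (w : MonoidAlgebra k G) (r : k) : w * single x r = w * single x' r := by
  induction w using MonoidAlgebra.induction_linear with
  | zero => simp only [zero_mul]
  | add a b ha hb => rw [add_mul, add_mul, ha, hb]
  | single a s => rw [single_mul_single, single_mul_single, h]

theorem sum_smul_single_one_ne_zero {I : Finset G} {α : G → k} {x₀ : G} (hx₀ : x₀ ∈ I)
    (hα : α x₀ ≠ 0) : ∑ x ∈ I, α x • (single x (1 : k) : MonoidAlgebra k G) ≠ 0 := fun h =>
  hα <| by
    simpa using linearIndependent_iff'ₛ.mp (basis G k).linearIndependent I α 0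
      (by simpa using h) x₀ hx₀

end MonoidAlgebra

theorem stmt16_general {Q R : Type*} [Quandle' Q] (p : Q → R)
    (cov : ∀ x x' : Q, p x = p x' → ∀ z : Q, z * x = z * x')
    (k : Type*) [CommRing k]
    (y : R)
    (I : Finset Q) (hI : ∀ x ∈ I, p x = y)
    (α : Q → k) (hsum : ∑ x ∈ I, α x = 0) (hne : ∃ x ∈ I, α x ≠ 0) :
    (∑ x ∈ I, α x • (MonoidAlgebra.single x (1 : k) : MonoidAlgebra k Q)) ≠ 0 ∧
    ∀ w : MonoidAlgebra k Q,
      w * (∑ x ∈ I, α x • (MonoidAlgebra.single x (1 : k) : MonoidAlgebra k Q)) = 0 := by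
  obtain ⟨x₀, hx₀, hαx₀⟩ := hne
  refine ⟨MonoidAlgebra.sum_smul_single_one_ne_zero hx₀ hαx₀, fun w => ?_⟩
  -- `w * e_x` depends only on `S_x`, which is constant on the fibre of a covering.
  have hconst : ∀ x ∈ I, w * MonoidAlgebra.single x (1 : k) = w * MonoidAlgebra.single x₀ 1 :=
    fun x hx => MonoidAlgebra.mul_single_congr (cov x x₀ (by rw [hI x hx, hI x₀ hx₀])) w 1
  calc w * ∑ x ∈ I, α x • MonoidAlgebra.single x (1 : k)
      = ∑ x ∈ I, α x • (w * MonoidAlgebra.single x₀ 1) := by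
        rw [Finset.mul_sum]
        exact Finset.sum_congr rfl fun x hx => by rw [mul_smul_comm, hconst x hx]
    _ = 0 := by rw [← Finset.sum_smul, hsum, zero_smul]

/-- For a quandle covering, a combination `∑ α_x e_x` over a fibre with `∑ α_x = 0`
(and some `α_x ≠ 0`) is a non-zero right zero-divisor: `w · u = 0` for all `w`. -/
theorem stmt16 {Q R : Type*} [Quandle' Q] [Quandle' R] (p : Q → R)
    (hom : ∀ a b : Q, p (a * b) = p a * p b) (surj : Function.Surjective p)
    (cov : ∀ x x' : Q, p x = p x' → ∀ z : Q, z * x = z * x')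
    (k : Type*) [CommRing k] [IsDomain k]
    (y : R) (hfib : ∃ x x' : Q, x ≠ x' ∧ p x = y ∧ p x' = y)
    (I : Finset Q) (hI : ∀ x ∈ I, p x = y)
    (α : Q → k) (hsum : ∑ x ∈ I, α x = 0) (hne : ∃ x ∈ I, α x ≠ 0) :
    (∑ x ∈ I, α x • (MonoidAlgebra.single x (1 : k) : MonoidAlgebra k Q)) ≠ 0 ∧
    ∀ w : MonoidAlgebra k Q,
      w * (∑ x ∈ I, α x • (MonoidAlgebra.single x (1 : k) : MonoidAlgebra k Q)) = 0 :=
  stmt16_general p cov k y I hI α hsum hne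
end

section
/- Let $p : X \to Y$ be a quandle covering, $y \in Y$, and $I_y$ a finite subset of $p^{-1}(y)$ with coefficients $\alpha_{x'} \in \mathbf{k}$ satisfying $\sum_{x' \in I_y} \alpha_{x'} = 1$. Then for any $w \in \mathbf{k}[X]$ and any fixed $x_0 \in p^{-1}(y)$: $w \cdot \left(\sum_{x' \in I_y} \alpha_{x'} e_{x'}\right) = w \cdot e_{x_0}$. In particular, $v = \sum_{x' \in I_y} \alpha_{x'} e_{x'}$ is an idempotent of $\mathbf{k}[X]$. -/
namespace MonoidAlgebra

variable {k G : Type*}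

theorem mul_single_eq_mul_single_of_forall_mul_eq [Semiring k] [Mul G] {a b : G}
    (h : ∀ z : G, z * a = z * b) (w : MonoidAlgebra k G) (r : k) :
    w * single a r = w * single b r := by
  induction w using MonoidAlgebra.induction with
  | zero => simp only [zero_mul]
  | single_add g s f _ _ ih => rw [add_mul, add_mul, ih, single_mul_single, single_mul_single, h]

theorem mul_sum_smul_single_eq [CommSemiring k] [Mul G] {I : Finset G} {α : G → k}
    (hsum : ∑ x ∈ I, α x = 1) {x₀ : G} (h : ∀ x ∈ I, ∀ z : G, z * x = z * x₀)
    (w : MonoidAlgebra k G) :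
    w * ∑ x ∈ I, α x • single x (1 : k) = w * single x₀ 1 := by
  calc w * ∑ x ∈ I, α x • single x (1 : k)
      = ∑ x ∈ I, α x • (w * single x₀ 1) := by
        rw [Finset.mul_sum]
        refine Finset.sum_congr rfl fun x hx => ?_
        rw [mul_smul_comm, mul_single_eq_mul_single_of_forall_mul_eq (h x hx)]
    _ = w * single x₀ 1 := by rw [← Finset.sum_smul, hsum, one_smul]

end MonoidAlgebra

open MonoidAlgebra in
theorem stmt17_general {Q R : Type*} [Quandle' Q] (p : Q → R)
    (cov : ∀ x x' : Q, p x = p x' → ∀ z : Q, z * x = z * x')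
    (k : Type*) [CommRing k]
    (y : R) (I : Finset Q) (hI : ∀ x ∈ I, p x = y)
    (α : Q → k) (hsum : ∑ x ∈ I, α x = 1) :
    (∀ (w : MonoidAlgebra k Q) (x0 : Q), p x0 = y →
      w * (∑ x ∈ I, α x • (MonoidAlgebra.single x (1 : k) : MonoidAlgebra k Q)) =
        w * MonoidAlgebra.single x0 (1 : k)) ∧
    (∑ x ∈ I, α x • (MonoidAlgebra.single x (1 : k) : MonoidAlgebra k Q)) *
        (∑ x ∈ I, α x • (MonoidAlgebra.single x (1 : k) : MonoidAlgebra k Q)) =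
      ∑ x ∈ I, α x • (MonoidAlgebra.single x (1 : k) : MonoidAlgebra k Q) := by
  have absorb : ∀ w x₀, p x₀ = y → w * ∑ x ∈ I, α x • single x (1 : k) = w * single x₀ 1 :=
    fun w x₀ hx₀ => mul_sum_smul_single_eq hsum (fun x hx => cov x x₀ ((hI x hx).trans hx₀.symm)) w
  refine ⟨absorb, ?_⟩
  -- `I` can only be empty when `k` is the zero ring.
  rcases I.eq_empty_or_nonempty with rfl | ⟨x₀, hx₀⟩
  · simp only [Finset.sum_empty, mul_zero]
  rw [absorb _ x₀ (hI x₀ hx₀), Finset.sum_mul]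
  refine Finset.sum_congr rfl fun x hx => ?_
  rw [smul_mul_assoc, single_mul_single, cov x₀ x ((hI x₀ hx₀).trans (hI x hx).symm),
    Quandle'.mul_self, mul_one]

/-- For a quandle covering, a combination `v = ∑ α_{x'} e_{x'}` over a fibre with
`∑ α_{x'} = 1` satisfies `w·v = w·e_{x₀}` for every `w` and every `x₀` in the fibre;
in particular `v` is an idempotent. -/
theorem stmt17 {Q R : Type*} [Quandle' Q] [Quandle' R] (p : Q → R)
    (hom : ∀ a b : Q, p (a * b) = p a * p b) (surj : Function.Surjective p)
    (cov : ∀ x x' : Q, p x = p x' → ∀ z : Q, z * x = z * x')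
    (k : Type*) [CommRing k] [IsDomain k]
    (y : R) (I : Finset Q) (hI : ∀ x ∈ I, p x = y)
    (α : Q → k) (hsum : ∑ x ∈ I, α x = 1) :
    (∀ (w : MonoidAlgebra k Q) (x0 : Q), p x0 = y →
      w * (∑ x ∈ I, α x • (MonoidAlgebra.single x (1 : k) : MonoidAlgebra k Q)) =
        w * MonoidAlgebra.single x0 (1 : k)) ∧
    (∑ x ∈ I, α x • (MonoidAlgebra.single x (1 : k) : MonoidAlgebra k Q)) *
        (∑ x ∈ I, α x • (MonoidAlgebra.single x (1 : k) : MonoidAlgebra k Q)) =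
      ∑ x ∈ I, α x • (MonoidAlgebra.single x (1 : k) : MonoidAlgebra k Q) :=
  stmt17_general p cov k y I hI α hsum
end

section
/- Let $X$ and $Y$ be trivial quandles of finite orders $n$ and $m$, let $f$ be a permutation of $X$ and $g$ a permutation of $Y$, and form the quandle $X \sqcup_{f,g} Y$ on the disjoint union with $x * x' = x$, $y * y' = y$, $x * y = f(x)$, $y * x = g(y)$ for $x, x' \in X$, $y, y' \in Y$. Suppose $f$ and $g$ act transitively on $X$ and $Y$ respectively, and $\alpha, \beta \in \mathbf{k}$ satisfy $\alpha n + \beta m = 1$. Then $u = \alpha \sum_{x \in X} e_x + \beta \sum_{y \in Y} e_y$ is an idempotent of $\mathbf{k}[X \sqcup_{f,g} Y]$. -/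
/-- The operation of the twisted union `X ⊔_{f,g} Y` of two trivial quandles. -/
def twistOp {X Y : Type*} (f : Equiv.Perm X) (g : Equiv.Perm Y) :
    X ⊕ Y → X ⊕ Y → X ⊕ Y
  | .inl x, .inl _ => .inl x
  | .inl x, .inr _ => .inl (f x)
  | .inr y, .inl _ => .inr (g y)
  | .inr y, .inr _ => .inr y

/-- For the twisted union of two finite trivial quandles by transitive permutations `f, g`,
and `α·|X| + β·|Y| = 1` in `k`, the element `α ∑_{x∈X} e_x + β ∑_{y∈Y} e_y` is an
idempotent of the quandle ring. -/
theorem stmt19 {X Y : Type*} [Fintype X] [Fintype Y] (k : Type*) [CommRing k] [IsDomain k]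
    (f : Equiv.Perm X) (g : Equiv.Perm Y)
    (hf : ∀ x x' : X, ∃ m : ℤ, (f ^ m) x = x')
    (hg : ∀ y y' : Y, ∃ m : ℤ, (g ^ m) y = y')
    (α β : k)
    (hαβ : α * (Fintype.card X : k) + β * (Fintype.card Y : k) = 1) :
    letI : Mul (X ⊕ Y) := ⟨twistOp f g⟩
    (α • ∑ x : X, (MonoidAlgebra.single (Sum.inl x : X ⊕ Y) (1 : k) : MonoidAlgebra k (X ⊕ Y))
        + β • ∑ y : Y, MonoidAlgebra.single (Sum.inr y : X ⊕ Y) (1 : k)) *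
      (α • ∑ x : X, MonoidAlgebra.single (Sum.inl x : X ⊕ Y) (1 : k)
        + β • ∑ y : Y, MonoidAlgebra.single (Sum.inr y : X ⊕ Y) (1 : k)) =
    α • ∑ x : X, MonoidAlgebra.single (Sum.inl x : X ⊕ Y) (1 : k)
        + β • ∑ y : Y, MonoidAlgebra.single (Sum.inr y : X ⊕ Y) (1 : k) := by
  letI : Mul (X ⊕ Y) := ⟨twistOp f g⟩
  set A : MonoidAlgebra k (X ⊕ Y) := ∑ x : X, MonoidAlgebra.single (Sum.inl x : X ⊕ Y) (1 : k)
    with hA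
  set B : MonoidAlgebra k (X ⊕ Y) := ∑ y : Y, MonoidAlgebra.single (Sum.inr y : X ⊕ Y) (1 : k)
    with hB
  have mll : ∀ (x x' : X), (Sum.inl x : X ⊕ Y) * Sum.inl x' = Sum.inl x := fun _ _ => rfl
  have mlr : ∀ (x : X) (y : Y), (Sum.inl x : X ⊕ Y) * Sum.inr y = Sum.inl (f x) := fun _ _ => rfl
  have mrl : ∀ (y : Y) (x : X), (Sum.inr y : X ⊕ Y) * Sum.inl x = Sum.inr (g y) := fun _ _ => rfl
  have mrr : ∀ (y y' : Y), (Sum.inr y : X ⊕ Y) * Sum.inr y' = Sum.inr y := fun _ _ => rfl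
  have hAA : A * A = (Fintype.card X : k) • A := by
    rw [hA, Finset.sum_mul_sum]
    simp only [MonoidAlgebra.single_mul_single, mll, one_mul, Finset.sum_const,
      Finset.card_univ, ← Nat.cast_smul_eq_nsmul k, Finset.smul_sum]
  have hAB : A * B = (Fintype.card Y : k) • A := by
    rw [hA, hB, Finset.sum_mul_sum]
    simp only [MonoidAlgebra.single_mul_single, mlr, one_mul, Finset.sum_const,
      Finset.card_univ, ← Nat.cast_smul_eq_nsmul k, Finset.smul_sum]
    exact Equiv.sum_comp f fun x =>
      (Fintype.card Y : k) • MonoidAlgebra.single (Sum.inl x : X ⊕ Y) (1 : k)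
  have hBA : B * A = (Fintype.card X : k) • B := by
    rw [hA, hB, Finset.sum_mul_sum]
    simp only [MonoidAlgebra.single_mul_single, mrl, one_mul, Finset.sum_const,
      Finset.card_univ, ← Nat.cast_smul_eq_nsmul k, Finset.smul_sum]
    exact Equiv.sum_comp g fun y =>
      (Fintype.card X : k) • MonoidAlgebra.single (Sum.inr y : X ⊕ Y) (1 : k)
  have hBB : B * B = (Fintype.card Y : k) • B := by
    rw [hB, Finset.sum_mul_sum]
    simp only [MonoidAlgebra.single_mul_single, mrr, one_mul, Finset.sum_const,
      Finset.card_univ, ← Nat.cast_smul_eq_nsmul k, Finset.smul_sum]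
  rw [add_mul, mul_add, mul_add, smul_mul_assoc, smul_mul_assoc, smul_mul_assoc, smul_mul_assoc,
    mul_smul_comm, mul_smul_comm, mul_smul_comm, mul_smul_comm, hAA, hAB, hBA, hBB]
  simp only [smul_smul]
  rw [← add_smul, ← add_smul]
  have h1 : α * (α * (Fintype.card X : k)) + α * (β * (Fintype.card Y : k)) = α := by
    linear_combination α * hαβ
  have h2 : β * (α * (Fintype.card X : k)) + β * (β * (Fintype.card Y : k)) = β := by
    linear_combination β * hαβ
  rw [h1, h2]
end
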